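/- arXiv:2303.00506 — 6 statements merged into one kernel-verified Lean document; each statement's English description precedes it below -/
import Mathlib

section
/- For any vector y ∈ ℝ^n, there exists a unique real number t such that ∑_{i=1}^n max(y_i - t, 0) = 1, and the vector x with x_i = max(y_i - t, 0) is the Euclidean projection of y onto the probability simplex Δ^n = {x ∈ ℝ^n_+ : ∑_i x_i = 1}. -/
open Finset
open scoped InnerProductSpace

/-!
The map `t ↦ ∑ᵢ max (yᵢ - t) 0` is continuous, vanishes for large `t`, is large for small `t`,
and strictly decreases wherever it is positive; hence it takes the value `1` exactly once.
For `xᵢ = max (yᵢ - t) 0` we have `xᵢ - yᵢ ≥ -t`, with equality wherever `xᵢ > 0`, so for every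
`z` in the simplex `⟪z - x, x - y⟫ ≥ -t (∑ zᵢ - ∑ xᵢ) = 0`. This variational inequality gives
`‖z - y‖² ≥ ‖z - x‖² + ‖x - y‖²`, i.e. `x` is the unique nearest point of the simplex.
-/

section Threshold

variable {ι : Type*} [Fintype ι] (y : ι → ℝ)

theorem exists_sum_max_sub_eq [Nonempty ι] {c : ℝ} (hc : 0 ≤ c) :
    ∃ t, ∑ i, max (y i - t) 0 = c := by
  obtain ⟨i₀⟩ := ‹Nonempty ι›
  have hcont : Continuous fun t => ∑ i, max (y i - t) 0 := by fun_prop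
  have hlow : ∑ i, max (y i - univ.sup' univ_nonempty y) 0 ≤ c := by
    rw [sum_eq_zero fun i _ => max_eq_right (sub_nonpos.2 (le_sup' y (mem_univ i)))]
    exact hc
  have hhigh : c ≤ ∑ i, max (y i - (y i₀ - c)) 0 :=
    calc c = max (y i₀ - (y i₀ - c)) 0 := by simp [hc]
      _ ≤ _ := single_le_sum (f := fun i => max (y i - (y i₀ - c)) 0)
          (fun _ _ => le_max_right _ _) (mem_univ i₀)
  exact intermediate_value_univ _ _ hcont ⟨hlow, hhigh⟩

theorem sum_max_sub_lt_of_lt {s t : ℝ} (hst : s < t) (hs : 0 < ∑ i, max (y i - s) 0) :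
    ∑ i, max (y i - t) 0 < ∑ i, max (y i - s) 0 := by
  obtain ⟨i, -, hi⟩ := exists_lt_of_sum_lt (f := fun _ => (0 : ℝ)) (by simpa using hs)
  refine sum_lt_sum (fun j _ => by gcongr) ⟨i, mem_univ i, ?_⟩
  have hi : 0 < y i - s := by simpa using hi
  rw [max_eq_left hi.le]
  exact max_lt (by linarith) hi

theorem existsUnique_sum_max_sub_eq [Nonempty ι] {c : ℝ} (hc : 0 < c) :
    ∃! t, ∑ i, max (y i - t) 0 = c := by
  obtain ⟨t, ht⟩ := exists_sum_max_sub_eq y hc.le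
  refine ⟨t, ht, fun s hs => ?_⟩
  rcases lt_trichotomy s t with hst | rfl | hts
  · exact ((sum_max_sub_lt_of_lt y hst (hs ▸ hc)).ne (ht.trans hs.symm)).elim
  · rfl
  · exact ((sum_max_sub_lt_of_lt y hts (ht ▸ hc)).ne (hs.trans ht.symm)).elim

end Threshold

theorem sub_mul_max_sub_sub_ge (a t z : ℝ) (hz : 0 ≤ z) :
    (z - max (a - t) 0) * -t ≤ (z - max (a - t) 0) * (max (a - t) 0 - a) := by
  rcases le_total a t with h | h
  · rw [max_eq_right (sub_nonpos.2 h), sub_zero, zero_sub]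
    exact mul_le_mul_of_nonneg_left (neg_le_neg h) hz
  · rw [max_eq_left (sub_nonneg.2 h)]
    exact le_of_eq (by ring)

section InnerProduct

variable {E : Type*} [NormedAddCommGroup E] [InnerProductSpace ℝ E] {x y z : E}

theorem sq_norm_sub_add_sq_norm_sub_le (h : 0 ≤ ⟪z - x, x - y⟫_ℝ) :
    ‖z - x‖ ^ 2 + ‖x - y‖ ^ 2 ≤ ‖z - y‖ ^ 2 := by
  rw [← sub_add_sub_cancel z x y, norm_add_sq_real]
  linarith

theorem norm_sub_le_of_inner_nonneg (h : 0 ≤ ⟪z - x, x - y⟫_ℝ) : ‖x - y‖ ≤ ‖z - y‖ :=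
  pow_le_pow_iff_left₀ (norm_nonneg _) (norm_nonneg _) two_ne_zero |>.1 <|
    le_of_add_le_of_nonneg_right (sq_norm_sub_add_sq_norm_sub_le h) (sq_nonneg _)

theorem eq_of_inner_nonneg_of_norm_eq (h : 0 ≤ ⟪z - x, x - y⟫_ℝ) (heq : ‖z - y‖ = ‖x - y‖) :
    z = x := by
  have := sq_norm_sub_add_sq_norm_sub_le h
  rw [heq, add_le_iff_nonpos_left] at this
  exact sub_eq_zero.1 (norm_eq_zero.1 (pow_eq_zero_iff two_ne_zero |>.1
    (le_antisymm this (sq_nonneg _))))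

end InnerProduct

theorem inner_sub_nonneg_of_eq_max_sub {ι : Type*} [Fintype ι] {x y z : EuclideanSpace ℝ ι}
    {t : ℝ} (hx : ∀ i, x i = max (y i - t) 0) (hz : ∀ i, 0 ≤ z i)
    (hsum : ∑ i, z i = ∑ i, x i) : 0 ≤ ⟪z - x, x - y⟫_ℝ :=
  calc 0 = ∑ i, (z i - x i) * -t := by rw [← sum_mul, sum_sub_distrib, hsum, sub_self, zero_mul]
    _ ≤ ∑ i, (z i - x i) * (x i - y i) :=
      sum_le_sum fun i _ => hx i ▸ sub_mul_max_sub_sub_ge (y i) t (z i) (hz i)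
    _ = ⟪z - x, x - y⟫_ℝ := by simp [PiLp.inner_apply, mul_comm]

/-- For any `y ∈ ℝⁿ` there is a unique `t` with `∑ᵢ max (yᵢ - t) 0 = 1`, and the vector
`x` with `xᵢ = max (yᵢ - t) 0` is the Euclidean projection of `y` onto the simplex. -/
theorem stmt0 (n : ℕ) (hn : 0 < n) (y : EuclideanSpace ℝ (Fin n)) :
    (∃! t : ℝ, ∑ i, max (y i - t) 0 = 1) ∧
    (∀ t : ℝ, (∑ i, max (y i - t) 0 = 1) →
      ∀ x : EuclideanSpace ℝ (Fin n), (∀ i, x i = max (y i - t) 0) →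
        ((∀ i, 0 ≤ x i) ∧ ∑ i, x i = 1) ∧
        ∀ z : EuclideanSpace ℝ (Fin n), (∀ i, 0 ≤ z i) → (∑ i, z i = 1) →
          ‖x - y‖ ≤ ‖z - y‖ ∧ (‖z - y‖ = ‖x - y‖ → z = x)) := by
  have : Nonempty (Fin n) := ⟨⟨0, hn⟩⟩
  refine ⟨existsUnique_sum_max_sub_eq y one_pos, fun t ht x hx => ?_⟩
  have hx_sum : ∑ i, x i = 1 := by simpa only [hx] using ht
  refine ⟨⟨fun i => hx i ▸ le_max_right _ _, hx_sum⟩, fun z hz hz_sum => ?_⟩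
  have hinner := inner_sub_nonneg_of_eq_max_sub hx hz (hz_sum.trans hx_sum.symm)
  exact ⟨norm_sub_le_of_inner_nonneg hinner, eq_of_inner_nonneg_of_norm_eq hinner⟩
end

section
/- Let b_i, b_i^+ ∈ ℝ^m with b_{ij}, b_{ij}^+ > 0 and ∑_j b_{ij}^+ = ∑_j b_{ij}. Let c_j ≥ 0 and set p_j = c_j + b_{ij}, p_j^+ = c_j + b_{ij}^+. Then ∑_j p_j^+ log(p_j^+/p_j) ≤ ∑_j b_{ij}^+ log(b_{ij}^+/b_{ij}). -/
/-! With `a = b' - b`, the two sides of each summand are the values of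
`f x = x * log (x / (x - a))` at `x = c + b'` and at `x = b' ≤ c + b'`. On `(max a 0, ∞)` the
derivative of `f` is `log t + 1 - t` with `t = x / (x - a) > 0`, which is nonpositive since
`log t ≤ t - 1`; so `f` is antitone there and the inequality holds term by term. -/

open Real Set

lemma hasDerivAt_mul_log_div_sub {a x : ℝ} (hx : 0 < x) (hxa : 0 < x - a) :
    HasDerivAt (fun y => y * log (y / (y - a)))
      (log (x / (x - a)) + 1 - x / (x - a)) x := by
  have hq : HasDerivAt (fun y => y / (y - a)) ((1 * (x - a) - x * 1) / (x - a) ^ 2) x :=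
    (hasDerivAt_id' x).div ((hasDerivAt_id' x).sub_const a) hxa.ne'
  refine ((hasDerivAt_id' x).mul (hq.log (div_pos hx hxa).ne')).congr_deriv ?_
  field_simp
  ring

lemma antitoneOn_mul_log_div_sub (a : ℝ) :
    AntitoneOn (fun x => x * log (x / (x - a))) (Ioi (max a 0)) := by
  have hmem : ∀ x ∈ Ioi (max a 0), 0 < x ∧ 0 < x - a := fun x hx =>
    ⟨(max_lt_iff.1 hx).2, sub_pos.2 (max_lt_iff.1 hx).1⟩
  have hderiv : ∀ x ∈ Ioi (max a 0), HasDerivAt (fun y => y * log (y / (y - a)))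
      (log (x / (x - a)) + 1 - x / (x - a)) x := fun x hx =>
    hasDerivAt_mul_log_div_sub (hmem x hx).1 (hmem x hx).2
  refine antitoneOn_of_hasDerivWithinAt_nonpos (convex_Ioi _)
    (fun x hx => (hderiv x hx).continuousAt.continuousWithinAt)
    (fun x hx => (hderiv x (interior_subset hx)).hasDerivWithinAt) fun x hx => ?_
  obtain ⟨hx, hxa⟩ := hmem x (interior_subset hx)
  linarith [log_le_sub_one_of_pos (div_pos hx hxa)]

lemma add_mul_log_add_div_add_le {b b' c : ℝ} (hb : 0 < b) (hb' : 0 < b') (hc : 0 ≤ c) :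
    (c + b') * log ((c + b') / (c + b)) ≤ b' * log (b' / b) := by
  have hb'_mem : b' ∈ Ioi (max (b' - b) 0) := max_lt (by linarith) hb'
  have hle : b' ≤ c + b' := le_add_of_nonneg_left hc
  have key := antitoneOn_mul_log_div_sub (b' - b) hb'_mem (hb'_mem.trans_le hle) hle
  dsimp only at key
  rwa [sub_sub_cancel, show c + b' - (b' - b) = c + b by ring] at key

theorem stmt8_general (m : ℕ) (b bp c : Fin m → ℝ)
    (hb : ∀ j, 0 < b j) (hbp : ∀ j, 0 < bp j) (hc : ∀ j, 0 ≤ c j) :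
    ∑ j, (c j + bp j) * Real.log ((c j + bp j) / (c j + b j))
      ≤ ∑ j, bp j * Real.log (bp j / b j) :=
  Finset.sum_le_sum fun j _ => add_mul_log_add_div_add_le (hb j) (hbp j) (hc j)

/-- When one buyer's bids change (so prices change by the same amounts), the
KL-type divergence of prices is bounded by the KL divergence of the bids. -/
theorem stmt8 (m : ℕ) (b bp c : Fin m → ℝ)
    (hb : ∀ j, 0 < b j) (hbp : ∀ j, 0 < bp j) (hc : ∀ j, 0 ≤ c j)
    (hsum : ∑ j, bp j = ∑ j, b j) :
    ∑ j, (c j + bp j) * Real.log ((c j + bp j) / (c j + b j))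
      ≤ ∑ j, bp j * Real.log (bp j / b j) :=
  stmt8_general m b bp c hb hbp hc
end

section
/- Consider the optimization problem min_{a ∈ ℝ^m} ⟨g, a - b⟩ + (1/α)·D_KL(a, b) subject to ∑_j a_j = B and a ≥ 0, where b ∈ ℝ^m with b_j > 0, g_j = 1 - log(v_j/p_j) with v_j, p_j > 0, α > 0, B > 0, and D_KL(a,b) = ∑_j a_j log(a_j/b_j) (with the convention using the kernel ∑_j (a_j log a_j - a_j)). Then the unique optimal solution is a_j = (1/Z)·b_j·(v_j/p_j)^α where Z = (1/B)·∑_j b_j (v_j/p_j)^α. -/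
/-!
Write `a⋆ⱼ = bⱼ e^{α(Λ - gⱼ)}` with `Λ = 1 - (log Z)/α`: this is the Gibbs tilt of `b` by `-α g`.
Splitting `log (aⱼ/bⱼ) = log (aⱼ/a⋆ⱼ) + log (a⋆ⱼ/bⱼ)` turns the objective into
`Λ ∑ aⱼ - ∑ gⱼ bⱼ + (1/α) ∑ aⱼ log (aⱼ/a⋆ⱼ)`, so on the simplex it differs from its value at `a⋆`
by `(1/α)` times the relative entropy of `a` with respect to `a⋆`. Gibbs' inequality finishes.
-/

open Finset Real InformationTheory

section Gibbs

variable {ι : Type*} [Fintype ι] {a c : ι → ℝ}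

lemma mul_klFun_div (x : ℝ) {y : ℝ} (hy : y ≠ 0) :
    y * klFun (x / y) = x * log (x / y) - x + y := by
  rw [klFun_apply]
  field_simp
  ring

lemma sum_mul_log_div_eq_sum_mul_klFun (hc : ∀ j, 0 < c j) (hac : ∑ j, a j = ∑ j, c j) :
    ∑ j, a j * log (a j / c j) = ∑ j, c j * klFun (a j / c j) := by
  simp only [fun j => mul_klFun_div (a j) (hc j).ne', sum_add_distrib, sum_sub_distrib, hac,
    sub_add_cancel]

lemma sum_mul_log_div_nonneg (ha : ∀ j, 0 ≤ a j) (hc : ∀ j, 0 < c j)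
    (hac : ∑ j, a j = ∑ j, c j) : 0 ≤ ∑ j, a j * log (a j / c j) := by
  rw [sum_mul_log_div_eq_sum_mul_klFun hc hac]
  exact sum_nonneg fun j _ => mul_nonneg (hc j).le (klFun_nonneg (div_nonneg (ha j) (hc j).le))

lemma eq_of_sum_mul_log_div_eq_zero (ha : ∀ j, 0 ≤ a j) (hc : ∀ j, 0 < c j)
    (hac : ∑ j, a j = ∑ j, c j) (h : ∑ j, a j * log (a j / c j) = 0) : a = c := by
  have hnonneg : ∀ j ∈ univ, 0 ≤ c j * klFun (a j / c j) :=
    fun j _ => mul_nonneg (hc j).le (klFun_nonneg (div_nonneg (ha j) (hc j).le))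
  rw [sum_mul_log_div_eq_sum_mul_klFun hc hac, sum_eq_zero_iff_of_nonneg hnonneg] at h
  funext j
  have hkl : klFun (a j / c j) = 0 := (mul_eq_zero.mp (h j (mem_univ j))).resolve_left (hc j).ne'
  rw [klFun_eq_zero_iff (div_nonneg (ha j) (hc j).le), div_eq_one_iff_eq (hc j).ne'] at hkl
  exact hkl

end Gibbs

lemma mul_log_div_eq_add (x : ℝ) {y z : ℝ} (hy : y ≠ 0) (hz : z ≠ 0) :
    x * log (x / y) = x * log (x / z) + x * log (z / y) := by
  rcases eq_or_ne x 0 with rfl | hx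
  · simp
  · rw [log_div hx hy, log_div hx hz, log_div hz hy]
    ring

lemma linear_add_sum_mul_log_div_eq {ι : Type*} [Fintype ι] (g b c a : ι → ℝ) {α Λ : ℝ}
    (hα : α ≠ 0) (hb : ∀ j, b j ≠ 0) (hc : ∀ j, c j ≠ 0)
    (hcb : ∀ j, log (c j / b j) = α * (Λ - g j)) :
    ∑ j, g j * (a j - b j) + (1 / α) * ∑ j, a j * log (a j / b j) =
      Λ * ∑ j, a j - ∑ j, g j * b j + (1 / α) * ∑ j, a j * log (a j / c j) := by
  have hterm : ∀ j, g j * (a j - b j) + 1 / α * (a j * log (a j / b j)) =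
      Λ * a j - g j * b j + 1 / α * (a j * log (a j / c j)) := fun j => by
    rw [mul_log_div_eq_add (a j) (hb j) (hc j), hcb]
    field_simp
    ring
  calc _ = ∑ j, (g j * (a j - b j) + 1 / α * (a j * log (a j / b j))) := by
        rw [sum_add_distrib, mul_sum]
    _ = ∑ j, (Λ * a j - g j * b j + 1 / α * (a j * log (a j / c j))) :=
        sum_congr rfl fun j _ => hterm j
    _ = _ := by rw [sum_add_distrib, sum_sub_distrib, mul_sum, mul_sum]

lemma sum_normalize_eq {ι : Type*} [Fintype ι] (u : ι → ℝ) {B : ℝ} (hB : B ≠ 0)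
    (hu : ∑ j, u j ≠ 0) : ∑ j, 1 / ((1 / B) * ∑ i, u i) * u j = B := by
  rw [← mul_sum]
  field_simp

lemma log_one_div_mul_mul_rpow_div {Z b r α : ℝ} (hZ : 0 < Z) (hb : b ≠ 0) (hr : 0 < r)
    (hα : α ≠ 0) :
    log (1 / Z * b * r ^ α / b) = α * ((1 - log Z / α) - (1 - log r)) := by
  rw [mul_comm _ b, mul_assoc, mul_div_cancel_left₀ _ hb, one_div,
    log_mul (inv_ne_zero hZ.ne') (rpow_pos_of_pos hr α).ne', log_inv, log_rpow hr]
  field_simp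
  ring

/-- Closed-form multiplicative update of (block coordinate) proportional response:
the unique optimizer of `min ⟨g, a - b⟩ + (1/α) D_KL(a,b)` over the scaled simplex
is `aⱼ = (1/Z) bⱼ (vⱼ/pⱼ)^α` with `Z = (1/B) ∑ⱼ bⱼ (vⱼ/pⱼ)^α`. -/
theorem stmt11 (m : ℕ) (hm : 0 < m) (b v p : Fin m → ℝ) (α B : ℝ)
    (hb : ∀ j, 0 < b j) (hv : ∀ j, 0 < v j) (hp : ∀ j, 0 < p j)
    (hα : 0 < α) (hB : 0 < B)
    (g : Fin m → ℝ) (hgdef : ∀ j, g j = 1 - Real.log (v j / p j))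
    (obj : (Fin m → ℝ) → ℝ)
    (hobj : obj = fun a => ∑ j, g j * (a j - b j)
      + (1 / α) * ∑ j, a j * Real.log (a j / b j))
    (Z : ℝ) (hZ : Z = (1 / B) * ∑ j, b j * (v j / p j) ^ α)
    (astar : Fin m → ℝ) (hastar : ∀ j, astar j = (1 / Z) * b j * (v j / p j) ^ α) :
    ((∀ j, 0 ≤ astar j) ∧ ∑ j, astar j = B) ∧
    ∀ a : Fin m → ℝ, (∀ j, 0 ≤ a j) → (∑ j, a j = B) →
      obj astar ≤ obj a ∧ (obj a = obj astar → a = astar) := by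
  have hvp : ∀ j, 0 < v j / p j := fun j => div_pos (hv j) (hp j)
  have hS : 0 < ∑ j, b j * (v j / p j) ^ α := by
    have : Nonempty (Fin m) := ⟨⟨0, hm⟩⟩
    exact sum_pos (fun j _ => mul_pos (hb j) (rpow_pos_of_pos (hvp j) α)) univ_nonempty
  have hZpos : 0 < Z := hZ ▸ by positivity
  have hpos : ∀ j, 0 < astar j := fun j => by
    rw [hastar j]
    exact mul_pos (mul_pos (by positivity) (hb j)) (rpow_pos_of_pos (hvp j) α)
  have hsum : ∑ j, astar j = B := by
    simp only [hastar, mul_assoc]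
    rw [hZ]
    exact sum_normalize_eq _ hB.ne' hS.ne'
  have hobj_eq : ∀ a : Fin m → ℝ, ∑ j, a j = B →
      obj a = (1 - log Z / α) * B - ∑ j, g j * b j + (1 / α) * ∑ j, a j * log (a j / astar j) :=
    fun a ha => by
      rw [hobj, ← ha]
      refine linear_add_sum_mul_log_div_eq g b astar a hα.ne' (fun j => (hb j).ne')
        (fun j => (hpos j).ne') fun j => ?_
      rw [hastar j, hgdef j]
      exact log_one_div_mul_mul_rpow_div hZpos (hb j).ne' (hvp j) hα.ne'
  refine ⟨⟨fun j => (hpos j).le, hsum⟩, fun a ha hsa => ?_⟩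
  have hac : ∑ j, a j = ∑ j, astar j := hsa.trans hsum.symm
  have hself : ∑ j, astar j * log (astar j / astar j) = 0 := by
    simp [div_self (hpos _).ne']
  rw [hobj_eq a hsa, hobj_eq astar hsum, hself, mul_zero, add_zero]
  refine ⟨le_add_of_nonneg_right (mul_nonneg (by positivity) (sum_mul_log_div_nonneg ha hpos hac)),
    fun h => eq_of_sum_mul_log_div_eq_zero ha hpos hac ?_⟩
  simpa [hα.ne'] using h
end

section
/- Let Φ be convex with minimizer value Φ* and suppose the random iterates b^k satisfy E[Φ(b^{k+1}) - Φ* + D(b*, b^{k+1}) | b^k] ≤ ((n-1)/n)(Φ(b^k) - Φ*) + D(b*, b^k) for all k, where D(b*, ·) ≥ 0 and n ≥ 1. If additionally E[Φ(b^{k+1})] ≤ E[Φ(b^k)] for all k, then E[Φ(b^k)] - Φ* ≤ (n/(n+k))·(Φ(b^0) - Φ* + D(b*, b^0)). -/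
open MeasureTheory Filter

/-- Sublinear `O(1/k)` rate for block coordinate mirror descent with `n` blocks:
from the per-step inequality
`E[Φ(b^{k+1}) - Φ* + D(b*, b^{k+1}) | F_k] ≤ ((n-1)/n)(Φ(b^k) - Φ*) + D(b*, b^k)`
and monotonicity of the expected objective,
`E[Φ(b^k)] - Φ* ≤ (n/(n+k)) (Φ(b^0) - Φ* + D(b*, b^0))` (in expectation). -/
theorem stmt13 {Ω : Type*} {m0 : MeasurableSpace Ω} (μ : Measure Ω)
    [IsProbabilityMeasure μ] (𝒻 : Filtration ℕ m0)
    (n : ℕ) (hn : 1 ≤ n)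
    (Φb Dst : ℕ → Ω → ℝ) (Φstar : ℝ)
    (hlb : ∀ k, ∀ᵐ ω ∂μ, Φstar ≤ Φb k ω)
    (hDnn : ∀ k, ∀ᵐ ω ∂μ, 0 ≤ Dst k ω)
    (hΦint : ∀ k, Integrable (Φb k) μ) (hDint : ∀ k, Integrable (Dst k) μ)
    (hcontract : ∀ k,
      μ[fun ω => Φb (k + 1) ω - Φstar + Dst (k + 1) ω|𝒻 k]
        ≤ᵐ[μ] fun ω => ((n : ℝ) - 1) / n * (Φb k ω - Φstar) + Dst k ω)
    (hmono : ∀ k, ∫ ω, Φb (k + 1) ω ∂μ ≤ ∫ ω, Φb k ω ∂μ) :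
    ∀ k : ℕ, (∫ ω, Φb k ω ∂μ) - Φstar
      ≤ (n / ((n : ℝ) + k)) * ((∫ ω, Φb 0 ω ∂μ) - Φstar + ∫ ω, Dst 0 ω ∂μ) := by
  set A : ℕ → ℝ := fun k => ∫ ω, Φb k ω ∂μ with hA
  set d : ℕ → ℝ := fun k => ∫ ω, Dst k ω ∂μ with hd
  have hnpos : (0:ℝ) < n := by exact_mod_cast hn
  -- nonnegativity of d
  have hdnn : ∀ k, 0 ≤ d k := fun k => integral_nonneg_of_ae (hDnn k)
  -- lower bound on A
  have hAlb : ∀ k, Φstar ≤ A k := by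
    intro k
    calc Φstar = ∫ _ω, Φstar ∂μ := by simp
      _ ≤ A k := integral_mono_ae (integrable_const _) (hΦint k) (hlb k)
  -- per-step inequality in expectation
  have key : ∀ k, (A (k+1) - Φstar) + d (k+1)
      ≤ ((n:ℝ)-1)/n * (A k - Φstar) + d k := by
    intro k
    have hintL : Integrable (fun ω => Φb (k+1) ω - Φstar + Dst (k+1) ω) μ :=
      (((hΦint (k+1)).sub (integrable_const _)).add (hDint (k+1)))
    have hintR : Integrable (fun ω => ((n:ℝ)-1)/n * (Φb k ω - Φstar) + Dst k ω) μ :=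
      ((((hΦint k).sub (integrable_const _)).const_mul _).add (hDint k))
    have h1 : ∫ ω, (Φb (k+1) ω - Φstar + Dst (k+1) ω) ∂μ
        ≤ ∫ ω, (((n:ℝ)-1)/n * (Φb k ω - Φstar) + Dst k ω) ∂μ := by
      rw [← integral_condExp (𝒻.le k)]
      exact integral_mono_ae integrable_condExp hintR (hcontract k)
    have hL : ∫ ω, (Φb (k+1) ω - Φstar + Dst (k+1) ω) ∂μ
        = (A (k+1) - Φstar) + d (k+1) := by
      rw [integral_add (f := fun ω => Φb (k+1) ω - Φstar) (g := fun ω => Dst (k+1) ω)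
          (by exact (hΦint (k+1)).sub (integrable_const Φstar)) (hDint (k+1)),
        integral_sub (f := fun ω => Φb (k+1) ω) (g := fun _ => Φstar)
          (hΦint (k+1)) (integrable_const Φstar)]
      simp [hA, hd]
    have hR : ∫ ω, (((n:ℝ)-1)/n * (Φb k ω - Φstar) + Dst k ω) ∂μ
        = ((n:ℝ)-1)/n * (A k - Φstar) + d k := by
      rw [integral_add (f := fun ω => ((n:ℝ)-1)/n * (Φb k ω - Φstar)) (g := fun ω => Dst k ω)
          (by exact ((hΦint k).sub (integrable_const Φstar)).const_mul _) (hDint k),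
        integral_const_mul,
        integral_sub (f := fun ω => Φb k ω) (g := fun _ => Φstar)
          (hΦint k) (integrable_const Φstar)]
      simp [hA, hd]
    rw [hL, hR] at h1
    exact h1
  -- summed inequality
  have hsum : ∀ k, (A k - Φstar) + d k + (1/(n:ℝ)) * ∑ l ∈ Finset.range k, (A l - Φstar)
      ≤ (A 0 - Φstar) + d 0 := by
    intro k
    induction k with
    | zero => simp
    | succ k ih =>
      have hk := key k
      have : ((n:ℝ)-1)/n * (A k - Φstar) = (A k - Φstar) - (1/n) * (A k - Φstar) := by
        field_simp
      rw [Finset.sum_range_succ]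
      nlinarith [hk, ih]
  -- monotonicity of A
  have hAmono : ∀ l k, l ≤ k → A k ≤ A l := by
    intro l k hlk
    induction k with
    | zero => simp_all
    | succ k ih =>
      rcases Nat.lt_or_ge l (k+1) with h | h
      · exact le_trans (hmono k) (ih (Nat.lt_succ_iff.mp h))
      · have : l = k+1 := le_antisymm hlk h
        simp [this]
  intro k
  have hsumk := hsum k
  have hsumge : (k:ℝ) * (A k - Φstar) ≤ ∑ l ∈ Finset.range k, (A l - Φstar) := by
    calc (k:ℝ) * (A k - Φstar) = ∑ _l ∈ Finset.range k, (A k - Φstar) := by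
          simp [mul_comm]
          ring
      _ ≤ ∑ l ∈ Finset.range k, (A l - Φstar) := by
          apply Finset.sum_le_sum
          intro l hl
          have := hAmono l k (le_of_lt (Finset.mem_range.mp hl))
          linarith
  have hkey : (A k - Φstar) * (((n:ℝ) + k)/n) ≤ (A 0 - Φstar) + d 0 := by
    have h1 : (A k - Φstar) + (1/(n:ℝ)) * ((k:ℝ) * (A k - Φstar)) ≤ (A 0 - Φstar) + d 0 := by
      have h2 : (1/(n:ℝ)) * ((k:ℝ) * (A k - Φstar))
          ≤ (1/(n:ℝ)) * ∑ l ∈ Finset.range k, (A l - Φstar) := by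
        apply mul_le_mul_of_nonneg_left hsumge (by positivity)
      linarith [hdnn k]
    have : (A k - Φstar) * (((n:ℝ) + k)/n)
        = (A k - Φstar) + (1/(n:ℝ)) * ((k:ℝ) * (A k - Φstar)) := by
      field_simp
    linarith [this ▸ h1]
  have hnk : (0:ℝ) < (n:ℝ) + k := by positivity
  have h2 : (A k - Φstar) * ((n:ℝ)+k) ≤ ((A 0 - Φstar) + d 0) * n := by
    have h3 := mul_le_mul_of_nonneg_right hkey hnpos.le
    calc (A k - Φstar) * ((n:ℝ)+k) = (A k - Φstar) * (((n:ℝ)+k)/n) * n := by field_simp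
      _ ≤ ((A 0 - Φstar) + d 0) * n := h3
  show A k - Φstar ≤ (n / ((n:ℝ)+k)) * (A 0 - Φstar + d 0)
  rw [div_mul_eq_mul_div, le_div_iff₀ hnk]
  linarith
end

section
/- Let b, b⁺, c ≥ 0 with b, b⁺ > 0, and suppose b⁺/b ∈ [1/β, β] for some β ∈ (1, √2]. If b⁺ ≥ b, then (b⁺ - b)²(c + b)² ≤ 2(c + λb⁺ + (1-λ)b)³(b⁺ - b/(2β)) for every λ ∈ [0,1]; the same inequality also holds if b⁺ < b. -/
/-!
Write `m = c + λb⁺ + (1-λ)b` and `q = b/(2β)`. If `b⁺ ≥ b`, then `0 ≤ b⁺ - b ≤ b ≤ c + b ≤ m` and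
`b⁺ - b ≤ b⁺ - q`, so the left side is at most `(b⁺ - q) m³`. If `b⁺ < b`, then `b - b⁺ ≤ b⁺ ≤ m`,
`c + b ≤ β (c + b⁺) ≤ β m` and, because `β ≤ √2`, `β² (b - b⁺) ≤ 2 (b⁺ - q)`; multiplying these
bounds the left side by `2 (b⁺ - q) m³`.
-/

namespace BCPR

lemma sq_mul_sub_le_two_mul_sub_div {b bp β : ℝ} (hβ : 1 ≤ β) (hβ2 : β ^ 2 ≤ 2) (hbp : 0 ≤ bp)
    (hb : b ≤ β * bp) : β ^ 2 * (b - bp) ≤ 2 * (bp - b / (2 * β)) := by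
  have hβ0 : 0 < β := by linarith
  -- after multiplying by `β` the claim reads `(β³ + 1) b ≤ (β³ + 2β) b⁺`, and
  -- `β⁴ + β ≤ β³ + 2β` because `β² (β - 1) ≤ 2 · 1/2`
  have hcubic : β ^ 2 * (β - 1) ≤ 2 * (1 / 2) :=
    mul_le_mul hβ2 (by nlinarith) (by linarith) (by norm_num)
  have hpoly : β ^ 4 + β ≤ β ^ 3 + 2 * β := by nlinarith [mul_le_mul_of_nonneg_left hcubic hβ0.le]
  have key : (β ^ 3 + 1) * b ≤ (β ^ 3 + 2 * β) * bp := by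
    calc (β ^ 3 + 1) * b ≤ (β ^ 3 + 1) * (β * bp) := by gcongr
      _ = (β ^ 4 + β) * bp := by ring
      _ ≤ (β ^ 3 + 2 * β) * bp := by gcongr
  rw [← mul_le_mul_iff_of_pos_left hβ0]
  calc β * (β ^ 2 * (b - bp)) = (β ^ 3 + 1) * b - β ^ 3 * bp - b := by ring
    _ ≤ (β ^ 3 + 2 * β) * bp - β ^ 3 * bp - b := by linarith
    _ = β * (2 * (bp - b / (2 * β))) := by field_simp; ring

lemma sub_sq_mul_sq_le_of_le {b bp c β m : ℝ} (hc : 0 ≤ c) (hβ : 1 ≤ 2 * β) (hle : b ≤ bp)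
    (hbp : bp ≤ 2 * b) (hm : c + b ≤ m) :
    (bp - b) ^ 2 * (c + b) ^ 2 ≤ 2 * m ^ 3 * (bp - b / (2 * β)) := by
  have hb : 0 ≤ b := by linarith
  have hq : b / (2 * β) ≤ b := div_le_self hb hβ
  have hm0 : 0 ≤ m := by linarith
  have hq0 : 0 ≤ bp - b / (2 * β) := by linarith
  calc (bp - b) ^ 2 * (c + b) ^ 2 = (bp - b) * (bp - b) * (c + b) ^ 2 := by ring
    _ ≤ (bp - b / (2 * β)) * m * m ^ 2 := by gcongr; linarith
    _ = m ^ 3 * (bp - b / (2 * β)) := by ring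
    _ ≤ 2 * m ^ 3 * (bp - b / (2 * β)) := by
        gcongr
        linarith [pow_nonneg hm0 3]

lemma sub_sq_mul_sq_le_of_lt {b bp c β m : ℝ} (hc : 0 ≤ c) (hbp : 0 ≤ bp) (hβ : 1 ≤ β)
    (hβ2 : β ^ 2 ≤ 2) (hlt : bp < b) (hb : b ≤ β * bp) (hm : c + bp ≤ m) :
    (bp - b) ^ 2 * (c + b) ^ 2 ≤ 2 * m ^ 3 * (bp - b / (2 * β)) := by
  have hdbp : b - bp ≤ bp := by nlinarith
  have hcb : c + b ≤ β * (c + bp) := by nlinarith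
  have hβd := sq_mul_sub_le_two_mul_sub_div hβ hβ2 hbp hb
  have hbpm : bp ≤ m := by linarith
  calc (bp - b) ^ 2 * (c + b) ^ 2 = (b - bp) * (b - bp) * (c + b) ^ 2 := by ring
    _ ≤ (b - bp) * bp * (β * (c + bp)) ^ 2 := by gcongr; linarith
    _ = β ^ 2 * (b - bp) * (bp * (c + bp) ^ 2) := by ring
    _ ≤ 2 * (bp - b / (2 * β)) * (m * m ^ 2) := by
        gcongr
        · nlinarith
        · linarith
    _ = 2 * m ^ 3 * (bp - b / (2 * β)) := by ring

end BCPR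

/-- Key algebraic inequality in the adaptive-stepsize BCPR analysis:
for `b, b⁺ > 0`, `c ≥ 0`, `b⁺/b ∈ [1/β, β]` with `β ∈ (1, √2]`,
`(b⁺ - b)² (c + b)² ≤ 2 (c + λb⁺ + (1-λ)b)³ (b⁺ - b/(2β))` for every `λ ∈ [0,1]`. -/
theorem stmt16 (b bp c β : ℝ) (hb : 0 < b) (hbp : 0 < bp) (hc : 0 ≤ c)
    (hβ1 : 1 < β) (hβ2 : β ≤ Real.sqrt 2)
    (hlo : 1 / β ≤ bp / b) (hhi : bp / b ≤ β) :
    ∀ lam ∈ Set.Icc (0 : ℝ) 1,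
      (bp - b) ^ 2 * (c + b) ^ 2
        ≤ 2 * (c + lam * bp + (1 - lam) * b) ^ 3 * (bp - b / (2 * β)) := by
  rintro lam ⟨hl0, hl1⟩
  have hβ0 : 0 < β := by linarith
  have hβsq : β ^ 2 ≤ 2 := by
    calc β ^ 2 ≤ Real.sqrt 2 ^ 2 := by gcongr
      _ = 2 := Real.sq_sqrt (by norm_num)
  have hb_le : b ≤ β * bp := by
    rw [div_le_div_iff₀ hβ0 hb] at hlo
    linarith
  have hbp_le : bp ≤ β * b := by
    rw [div_le_iff₀ hb] at hhi
    linarith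
  have hβ_le_two : β ≤ 2 := by nlinarith
  rcases le_or_gt b bp with hge | hlt
  · refine BCPR.sub_sq_mul_sq_le_of_le hc (by linarith) hge (by nlinarith) ?_
    nlinarith [mul_nonneg hl0 (sub_nonneg.2 hge)]
  · refine BCPR.sub_sq_mul_sq_le_of_lt hc hbp.le hβ1.le hβsq hlt hb_le ?_
    nlinarith [mul_nonneg (sub_nonneg.2 hl1) (sub_nonneg.2 hlt.le)]
end

section
/- Let positive reals {b*_{ij}} and {b_{ij}} (over finite index sets i ∈ [n], j ∈ [m]) satisfy ∑_{i,j} b*_{ij} = ∑_{i,j} b_{ij}. Let η = max_{i,j} |b_{ij} - b*_{ij}|/b*_{ij}. Then D_KL(b*, b) = ∑_{i,j} b*_{ij} log(b*_{ij}/b_{ij}) ≥ (1/8)·min{1, η}·η·min_{i,j} b*_{ij}. -/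
/-!
Each summand of `∑ b* log (b*/b) + ∑ (b - b*)` is `b* ψ(b/b*)` with `ψ(x) = x - 1 - log x ≥ 0`,
and equal total masses make the second sum vanish. So the divergence dominates the single
summand at the index where the relative deviation `η` is attained. There
`ψ(x) ≥ (√x - 1)²` (apply `log y ≤ y - 1` at `y = √x`), and `(√x - 1)² ≥ min(1, |x - 1|) |x - 1| / 8`
because `x - 1 = (√x - 1)(√x + 1)`.
-/

open Finset Real

lemma sq_sqrt_sub_one_le_sub_one_sub_log {x : ℝ} (hx : 0 < x) :
    (√x - 1) ^ 2 ≤ x - 1 - log x := by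
  have hsq : √x ^ 2 = x := sq_sqrt hx.le
  have hlog_sqrt : log √x ≤ √x - 1 := log_le_sub_one_of_pos (sqrt_pos.mpr hx)
  have hlog : log x = 2 * log √x := by rw [log_sqrt hx.le]; ring
  nlinarith [sqrt_nonneg x]

lemma min_one_abs_mul_abs_div_eight_le_sq_sqrt_sub_one {x : ℝ} (hx : 0 < x) :
    1 / 8 * min 1 |x - 1| * |x - 1| ≤ (√x - 1) ^ 2 := by
  set s := √x
  have hsq : s ^ 2 = x := sq_sqrt hx.le
  have hs : 0 ≤ s := sqrt_nonneg x
  have hfactor : x - 1 = (s - 1) * (s + 1) := by rw [← hsq]; ring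
  rcases le_or_gt |x - 1| 1 with hsmall | hlarge
  · have hs_le : s ≤ 3 / 2 := by nlinarith [(abs_le.mp hsmall).2]
    rw [min_eq_right hsmall, mul_assoc, ← sq, sq_abs, hfactor]
    nlinarith [sq_nonneg (s - 1), mul_nonneg (sq_nonneg (s - 1)) (by linarith : (0 : ℝ) ≤ 3 / 2 - s)]
  · have hx_gt : 2 < x := by
      by_contra! hx_le
      exact hlarge.not_ge (abs_le.mpr ⟨by linarith, by linarith⟩)
    have hs_ge : 7 / 5 ≤ s := by nlinarith
    rw [min_eq_left hlarge.le, abs_of_pos (by linarith : (0 : ℝ) < x - 1), hfactor]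
    nlinarith [mul_nonneg (by linarith : (0 : ℝ) ≤ 7 * s - 9) (by linarith : (0 : ℝ) ≤ s - 1)]

lemma min_one_relDev_mul_relDev_div_eight_mul_le {a x : ℝ} (ha : 0 < a) (hx : 0 < x) :
    1 / 8 * min 1 (|x - a| / a) * (|x - a| / a) * a ≤ a * log (a / x) + x - a := by
  have hdev : |x - a| / a = |x / a - 1| := by
    rw [← abs_of_pos ha, ← abs_div, abs_of_pos ha, sub_div, div_self ha.ne']
  have hlog : log (a / x) = -log (x / a) := by rw [← log_inv, inv_div]
  have hterm : a * log (a / x) + x - a = (x / a - 1 - log (x / a)) * a := by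
    rw [hlog]; field_simp; ring
  rw [hdev, hterm]
  have hxa : 0 < x / a := div_pos hx ha
  exact mul_le_mul_of_nonneg_right
    ((min_one_abs_mul_abs_div_eight_le_sq_sqrt_sub_one hxa).trans
      (sq_sqrt_sub_one_le_sub_one_sub_log hxa)) ha.le

lemma min_one_relDev_mul_relDev_div_eight_mul_le_sum_mul_log_div {ι : Type*} [Fintype ι]
    {p q : ι → ℝ} (hp : ∀ i, 0 < p i) (hq : ∀ i, 0 < q i) (hsum : ∑ i, p i = ∑ i, q i) (k : ι) :
    1 / 8 * min 1 (|q k - p k| / p k) * (|q k - p k| / p k) * p k ≤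
      ∑ i, p i * log (p i / q i) := by
  have hterm i := min_one_relDev_mul_relDev_div_eight_mul_le (hp i) (hq i)
  have hterm_nonneg i : 0 ≤ p i * log (p i / q i) + q i - p i :=
    (by have := hp i; positivity : (0 : ℝ) ≤ _).trans (hterm i)
  have hdiv : ∑ i, (p i * log (p i / q i) + q i - p i) = ∑ i, p i * log (p i / q i) := by
    rw [sum_sub_distrib, sum_add_distrib, ← hsum, add_sub_cancel_right]
  calc _ ≤ p k * log (p k / q k) + q k - p k := hterm k
    _ ≤ ∑ i, (p i * log (p i / q i) + q i - p i) :=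
      single_le_sum (fun i _ => hterm_nonneg i) (mem_univ k)
    _ = _ := hdiv

/-- Zhang (2011), Lemma 9: for positive arrays with equal total mass,
`D_KL(b*, b) ≥ (1/8) min{1, η} η minᵢⱼ b*ᵢⱼ` where `η` is the maximum relative
deviation of `b` from `b*`. -/
theorem stmt19 (n m : ℕ) (bstar b : Fin (n + 1) → Fin (m + 1) → ℝ)
    (hbs : ∀ i j, 0 < bstar i j) (hb : ∀ i j, 0 < b i j)
    (hsum : ∑ i, ∑ j, bstar i j = ∑ i, ∑ j, b i j) :
    (1 / 8) *
        min 1 (Finset.univ.sup' Finset.univ_nonempty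
          (fun p : Fin (n + 1) × Fin (m + 1) =>
            |b p.1 p.2 - bstar p.1 p.2| / bstar p.1 p.2)) *
        (Finset.univ.sup' Finset.univ_nonempty
          (fun p : Fin (n + 1) × Fin (m + 1) =>
            |b p.1 p.2 - bstar p.1 p.2| / bstar p.1 p.2)) *
        (Finset.univ.inf' Finset.univ_nonempty
          (fun p : Fin (n + 1) × Fin (m + 1) => bstar p.1 p.2))
      ≤ ∑ i, ∑ j, bstar i j * Real.log (bstar i j / b i j) := by
  obtain ⟨k, -, hk⟩ := exists_mem_eq_sup' univ_nonempty
    fun p : Fin (n + 1) × Fin (m + 1) => |b p.1 p.2 - bstar p.1 p.2| / bstar p.1 p.2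
  have hdev_nonneg : 0 ≤ |b k.1 k.2 - bstar k.1 k.2| / bstar k.1 k.2 := by
    have := hbs k.1 k.2; positivity
  have hinf_le : univ.inf' univ_nonempty (fun p : Fin (n + 1) × Fin (m + 1) => bstar p.1 p.2)
      ≤ bstar k.1 k.2 := inf'_le _ (mem_univ k)
  rw [hk, ← Fintype.sum_prod_type']
  refine (mul_le_mul_of_nonneg_left hinf_le (by positivity)).trans ?_
  exact min_one_relDev_mul_relDev_div_eight_mul_le_sum_mul_log_div (fun p => hbs p.1 p.2)
    (fun p => hb p.1 p.2) (by simpa only [Fintype.sum_prod_type'] using hsum) k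
end
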